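/- Let A₀ and A₁ be nonempty compact convex sets of density operators on a finite-dimensional complex Hilbert space, and let d = min{‖σ₀ - σ₁‖₁ : σ₀ ∈ A₀, σ₁ ∈ A₁}. Then there exists a single two-outcome measurement {P₀, P₁} such that ⟨P₀ - P₁, ρ₀ - ρ₁⟩ ≥ d for every ρ₀ ∈ A₀ and ρ₁ ∈ A₁. -/

import Mathlib

open Matrix ComplexOrder

/-- The square root of a positive semidefinite matrix, as `Matrix.PosSemidef.sqrt` was defined in
the older Mathlib (removed since). -/
noncomputable def posSemidefSqrt {n : ℕ} {A : Matrix (Fin n) (Fin n) ℂ} (hA : A.PosSemidef) :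
    Matrix (Fin n) (Fin n) ℂ :=
  (hA.1.eigenvectorUnitary : Matrix (Fin n) (Fin n) ℂ) *
    diagonal ((↑) ∘ (√·) ∘ hA.1.eigenvalues) * (star hA.1.eigenvectorUnitary : Matrix (Fin n) (Fin n) ℂ)

/-- The trace norm of a matrix: the sum of its singular values, i.e. `Tr √(XᴴX)`. -/
noncomputable def traceNorm {n : ℕ} (X : Matrix (Fin n) (Fin n) ℂ) : ℝ :=
  ((posSemidefSqrt (Matrix.posSemidef_conjTranspose_mul_self X)).trace).re

/-!
For Hermitian `X`, `‖X‖₁ = ∑ᵢ |λᵢ(X)|`, and the trace norm is dual to the operator norm: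
`Re Tr(QX) ≤ ‖X‖₁` whenever `-1 ≤ Q ≤ 1`, with equality when `Q` is the sign of `X`. Hence
`X ↦ ‖Re X‖₁` is a continuous seminorm on all matrices. The convex set `A₀ - A₁` misses its open
ball of radius `d`, so Hahn–Banach gives a real functional that is dominated by the seminorm and
at least `d` on `A₀ - A₁`. Written as `X ↦ Re Tr(QX)` with `Q` Hermitian, domination forces
`-1 ≤ Q ≤ 1`, and `P₀, P₁ = (1 ± Q) / 2` is the required measurement.
-/

open scoped MatrixOrder Pointwise

namespace Matrix

variable {𝕜 ι : Type*} [RCLike 𝕜]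

lemma IsHermitian.trace_cfc [Fintype ι] [DecidableEq ι] {A : Matrix ι ι 𝕜} (hA : A.IsHermitian)
    (f : ℝ → ℝ) : (cfc f A).trace = ∑ i, (f (hA.eigenvalues i) : 𝕜) := by
  rw [hA.cfc_eq, IsHermitian.cfc, Unitary.conjStarAlgAut_apply, trace_mul_cycle,
    Unitary.coe_star_mul_self, one_mul, trace_diagonal]
  rfl

lemma abs_re_diag_le_one [DecidableEq ι] {Q : Matrix ι ι 𝕜} (hQ : Q ∈ Set.Icc (-1) 1) (i : ι) :
    |RCLike.re (Q i i)| ≤ 1 := by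
  have h₁ := (le_iff.mp hQ.1).diag_nonneg (i := i)
  have h₂ := (le_iff.mp hQ.2).diag_nonneg (i := i)
  simp only [sub_apply, neg_apply, one_apply_eq, sub_neg_eq_add] at h₁ h₂
  replace h₁ := (RCLike.nonneg_iff.mp h₁).1
  replace h₂ := (RCLike.nonneg_iff.mp h₂).1
  simp only [map_add, map_sub, RCLike.one_re] at h₁ h₂
  exact abs_le.mpr ⟨by linarith, by linarith⟩

lemma le_of_forall_re_dotProduct_mulVec_le [Fintype ι] {A B : Matrix ι ι 𝕜} (hA : A.IsHermitian)
    (hB : B.IsHermitian) (h : ∀ x, RCLike.re (star x ⬝ᵥ A *ᵥ x) ≤ RCLike.re (star x ⬝ᵥ B *ᵥ x)) :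
    A ≤ B := by
  refine le_iff.mpr (PosSemidef.of_dotProduct_mulVec_nonneg (hB.sub hA) fun x => ?_)
  rw [sub_mulVec, dotProduct_sub, RCLike.nonneg_iff, map_sub, map_sub,
    hA.im_star_dotProduct_mulVec_self, hB.im_star_dotProduct_mulVec_self, sub_self]
  exact ⟨sub_nonneg.mpr (h x), rfl⟩

lemma exists_re_trace_mul_eq [Fintype ι] (f : Module.Dual ℝ (Matrix ι ι ℂ)) :
    ∃ Q : Matrix ι ι ℂ, ∀ X, f X = (Q * X).trace.re := by
  let B : LinearMap.BilinForm ℝ (Matrix ι ι ℂ) :=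
    (LinearMap.mul ℝ (Matrix ι ι ℂ)).compr₂ (Complex.reLm ∘ₗ traceLinearMap ι ℝ ℂ)
  have hB : B.Nondegenerate := .ofSeparatingLeft fun Q hQ => by
    have h0 : (Q * Qᴴ).trace.re = 0 := hQ Qᴴ
    have hnonneg := Complex.nonneg_iff.mp (posSemidef_self_mul_conjTranspose Q).trace_nonneg
    exact trace_mul_conjTranspose_self_eq_zero_iff.mp (Complex.ext h0 hnonneg.2.symm)
  exact ⟨(B.toDual hB).symm f,
    fun X => (LinearMap.BilinForm.apply_toDual_symm_apply (hB := hB) f X).symm⟩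

lemma re_trace_realPart_mul [Fintype ι] {Q X : Matrix ι ι ℂ} (hX : X.IsHermitian) :
    ((realPart Q : Matrix ι ι ℂ) * X).trace.re = (Q * X).trace.re := by
  have hstar : (star Q * X).trace.re = (Q * X).trace.re := by
    rw [← hX.isSelfAdjoint.star_eq, ← star_mul, star_eq_conjTranspose, trace_conjTranspose,
      trace_mul_comm, hX.isSelfAdjoint.star_eq]
    exact Complex.conj_re _
  rw [realPart_apply_coe, smul_mul_assoc, trace_smul, add_mul, trace_add]
  simp only [Complex.real_smul, Complex.re_ofReal_mul, Complex.add_re, hstar]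
  ring

end Matrix

section Separation

variable {E : Type*} [AddCommGroup E] [Module ℝ E]

lemma Seminorm.le_div_mul_of_lt_on_ball (p : Seminorm ℝ E) (g : E →ₗ[ℝ] ℝ) {d u : ℝ}
    (hd : 0 < d) (hg : ∀ x ∈ p.ball 0 d, g x < u) (x : E) : g x ≤ u / d * p x := by
  by_contra! hlt
  have hu : 0 < u := by simpa using hg 0 (p.mem_ball_self hd)
  have hgx : 0 < g x := lt_of_le_of_lt (by positivity) hlt
  have hx : (u / g x) • x ∈ p.ball 0 d := by
    rw [p.mem_ball_zero, map_smul_eq_mul, Real.norm_eq_abs, abs_of_pos (div_pos hu hgx),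
      div_mul_eq_mul_div, div_lt_iff₀ hgx]
    rw [div_mul_eq_mul_div, div_lt_iff₀ hd] at hlt
    linarith
  simpa [div_mul_cancel₀ u hgx.ne'] using hg _ hx

variable [TopologicalSpace E] [IsTopologicalAddGroup E] [ContinuousSMul ℝ E]

lemma Seminorm.exists_clm_le_and_ge_on_convex (p : Seminorm ℝ E) (hp : Continuous p)
    {D : Set E} (hD : Convex ℝ D) {d : ℝ} (hd : ∀ x ∈ D, d ≤ p x) :
    ∃ f : StrongDual ℝ E, (∀ x, f x ≤ p x) ∧ ∀ x ∈ D, d ≤ f x := by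
  rcases le_or_gt d 0 with hd₀ | hd₀
  · exact ⟨0, fun x => by simp, fun x _ => by simpa using hd₀⟩
  have hdisj : Disjoint (p.ball 0 d) D := Set.disjoint_left.mpr fun x hxB hxD =>
    (hd x hxD).not_gt (p.mem_ball_zero.mp hxB)
  obtain ⟨g, u, hgB, hgD⟩ := geometric_hahn_banach_open (p.convex_ball 0 d)
    (p.ball_zero_eq ▸ isOpen_lt hp continuous_const) hD hdisj
  have hu : 0 < u := by simpa using hgB 0 (p.mem_ball_self hd₀)
  refine ⟨(d / u) • g, fun x => ?_, fun x hx => ?_⟩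
  · calc (d / u) • g x ≤ d / u * (u / d * p x) :=
          mul_le_mul_of_nonneg_left (p.le_div_mul_of_lt_on_ball g.toLinearMap hd₀ hgB x)
            (by positivity)
      _ = p x := by field_simp
  · calc d = d / u * u := by field_simp
      _ ≤ (d / u) • g x := mul_le_mul_of_nonneg_left (hgD x hx) (by positivity)

end Separation

variable {n : ℕ}

lemma posSemidefSqrt_eq_cfc {A : Matrix (Fin n) (Fin n) ℂ} (hA : A.PosSemidef) :
    posSemidefSqrt hA = cfc Real.sqrt A := by
  rw [hA.1.cfc_eq, IsHermitian.cfc, Unitary.conjStarAlgAut_apply]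
  rfl

lemma traceNorm_eq_sum_abs_eigenvalues {X : Matrix (Fin n) (Fin n) ℂ} (hX : X.IsHermitian) :
    traceNorm X = ∑ i, |hX.eigenvalues i| := by
  have hsq : Xᴴ * X = cfc (· ^ 2 : ℝ → ℝ) X := by
    rw [cfc_pow_id X 2 hX.isSelfAdjoint, hX.eq, sq]
  rw [traceNorm, posSemidefSqrt_eq_cfc, hsq, ← cfc_comp Real.sqrt (· ^ 2) X, hX.trace_cfc]
  simp [Real.sqrt_sq_eq_abs]

lemma traceNorm_of_posSemidef {Y : Matrix (Fin n) (Fin n) ℂ} (hY : Y.PosSemidef) :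
    traceNorm Y = Y.trace.re := by
  rw [traceNorm_eq_sum_abs_eigenvalues hY.1, hY.1.trace_eq_sum_eigenvalues]
  simp [abs_of_nonneg (hY.eigenvalues_nonneg _)]

lemma abs_re_trace_mul_le_traceNorm {Q X : Matrix (Fin n) (Fin n) ℂ} (hX : X.IsHermitian)
    (hQ : Q ∈ Set.Icc (-1) 1) : |(Q * X).trace.re| ≤ traceNorm X := by
  set U : Matrix (Fin n) (Fin n) ℂ := (hX.eigenvectorUnitary : Matrix (Fin n) (Fin n) ℂ)
  have hU : star U * U = 1 := Unitary.coe_star_mul_self _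
  have hQ' : star U * Q * U ∈ Set.Icc (-1) 1 := by
    constructor
    · simpa [hU] using star_left_conjugate_le_conjugate hQ.1 U
    · simpa [hU] using star_left_conjugate_le_conjugate hQ.2 U
  have htrace : (Q * X).trace = ∑ i, (star U * Q * U) i i * hX.eigenvalues i := by
    conv_lhs => rw [hX.spectral_theorem, Unitary.conjStarAlgAut_apply, ← mul_assoc, ← mul_assoc,
      trace_mul_cycle, ← mul_assoc]
    simp [trace, mul_diagonal, U]
  rw [htrace, Complex.re_sum, traceNorm_eq_sum_abs_eigenvalues hX]
  refine (Finset.abs_sum_le_sum_abs _ _).trans (Finset.sum_le_sum fun i _ => ?_)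
  rw [Complex.re_mul_ofReal, abs_mul]
  exact mul_le_of_le_one_left (abs_nonneg _) (abs_re_diag_le_one hQ' i)

lemma exists_re_trace_mul_eq_traceNorm {X : Matrix (Fin n) (Fin n) ℂ} (hX : X.IsHermitian) :
    ∃ Q ∈ Set.Icc (-1 : Matrix (Fin n) (Fin n) ℂ) 1, (Q * X).trace.re = traceNorm X := by
  set s : ℝ → ℝ := fun x => if 0 ≤ x then 1 else -1
  have hs : ContinuousOn s (spectrum ℝ X) := X.finite_real_spectrum.continuousOn s
  have hs_abs : (fun x : ℝ => |x|) = fun x => s x * x := by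
    ext x
    simp only [s]
    split_ifs with h
    · simp [abs_of_nonneg h]
    · simp [abs_of_neg (not_le.mp h)]
  refine ⟨cfc s X, ⟨?_, ?_⟩, ?_⟩
  · simpa using algebraMap_le_cfc s (-1) X fun x _ => by simp only [s]; split_ifs <;> norm_num
  · exact cfc_le_one s X fun x _ => by simp only [s]; split_ifs <;> norm_num
  · nth_rw 2 [← cfc_id' ℝ X]
    rw [← cfc_mul s (fun x => x) X, ← hs_abs, hX.trace_cfc]
    simp [traceNorm_eq_sum_abs_eigenvalues hX]

lemma traceNorm_add_le {X Y : Matrix (Fin n) (Fin n) ℂ} (hX : X.IsHermitian)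
    (hY : Y.IsHermitian) : traceNorm (X + Y) ≤ traceNorm X + traceNorm Y := by
  obtain ⟨Q, hQ, hQXY⟩ := exists_re_trace_mul_eq_traceNorm (hX.add hY)
  rw [← hQXY, mul_add, trace_add, Complex.add_re]
  exact add_le_add ((le_abs_self _).trans (abs_re_trace_mul_le_traceNorm hX hQ))
    ((le_abs_self _).trans (abs_re_trace_mul_le_traceNorm hY hQ))

lemma traceNorm_smul_le {X : Matrix (Fin n) (Fin n) ℂ} (hX : X.IsHermitian) (c : ℝ) :
    traceNorm (c • X) ≤ |c| * traceNorm X := by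
  obtain ⟨Q, hQ, hQcX⟩ := exists_re_trace_mul_eq_traceNorm (hX.smul (IsSelfAdjoint.all c))
  rw [← hQcX, mul_smul_comm, trace_smul, Complex.smul_re, smul_eq_mul]
  calc c * (Q * X).trace.re ≤ |c| * |(Q * X).trace.re| := by rw [← abs_mul]; exact le_abs_self _
    _ ≤ |c| * traceNorm X :=
      mul_le_mul_of_nonneg_left (abs_re_trace_mul_le_traceNorm hX hQ) (abs_nonneg c)

lemma traceNorm_neg_le {X : Matrix (Fin n) (Fin n) ℂ} (hX : X.IsHermitian) :
    traceNorm (-X) ≤ traceNorm X := by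
  simpa using traceNorm_smul_le hX (-1)

lemma traceNorm_zero : traceNorm (0 : Matrix (Fin n) (Fin n) ℂ) = 0 := by
  obtain ⟨Q, -, hQ⟩ := exists_re_trace_mul_eq_traceNorm (isHermitian_zero (n := Fin n) (α := ℂ))
  simpa using hQ.symm

lemma mem_Icc_of_re_trace_mul_le_traceNorm {Q : Matrix (Fin n) (Fin n) ℂ} (hQ : Q.IsHermitian)
    (h : ∀ Y, Y.IsHermitian → (Q * Y).trace.re ≤ traceNorm Y) : Q ∈ Set.Icc (-1) 1 := by
  have hquad (x : Fin n → ℂ) : |(star x ⬝ᵥ Q *ᵥ x).re| ≤ (star x ⬝ᵥ x).re := by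
    have hY := posSemidef_vecMulVec_self_star x
    have htn : traceNorm (vecMulVec x (star x)) = (star x ⬝ᵥ x).re := by
      rw [traceNorm_of_posSemidef hY, trace_vecMulVec, dotProduct_comm]
    have hQY : (Q * vecMulVec x (star x)).trace = star x ⬝ᵥ Q *ᵥ x := by
      rw [mul_vecMulVec, trace_vecMulVec, dotProduct_comm]
    have hle := h _ hY.1
    have hge := (h _ hY.1.neg).trans (traceNorm_neg_le hY.1)
    rw [hQY, htn] at hle
    rw [mul_neg, trace_neg, Complex.neg_re, hQY, htn] at hge
    exact abs_le.mpr ⟨by linarith, hle⟩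
  refine ⟨le_of_forall_re_dotProduct_mulVec_le isHermitian_one.neg hQ fun x => ?_,
    le_of_forall_re_dotProduct_mulVec_le hQ isHermitian_one fun x => ?_⟩
  · simp only [neg_mulVec, one_mulVec, dotProduct_neg, map_neg, RCLike.re_to_complex]
    linarith [(abs_le.mp (hquad x)).1]
  · simp only [one_mulVec]
    exact (le_abs_self _).trans (hquad x)

noncomputable def realPartTraceNorm : Seminorm ℝ (Matrix (Fin n) (Fin n) ℂ) :=
  .ofSMulLE (fun X => traceNorm (realPart X : Matrix (Fin n) (Fin n) ℂ)) (by simp [traceNorm_zero])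
    (fun X Y => by rw [map_add]; exact traceNorm_add_le (realPart X).2 (realPart Y).2)
    (fun c X => by rw [map_smul, Real.norm_eq_abs]; exact traceNorm_smul_le (realPart X).2 c)

lemma realPartTraceNorm_of_isHermitian {X : Matrix (Fin n) (Fin n) ℂ} (hX : X.IsHermitian) :
    realPartTraceNorm X = traceNorm X := by
  show traceNorm (realPart X : Matrix (Fin n) (Fin n) ℂ) = _
  rw [hX.isSelfAdjoint.coe_realPart]

lemma continuous_realPartTraceNorm : Continuous (realPartTraceNorm (n := n)) := by
  -- Any norm inducing the product topology will do: convex functions on finite-dimensional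
  -- normed spaces are continuous.
  let : NormedAddCommGroup (Matrix (Fin n) (Fin n) ℂ) := Matrix.normedAddCommGroup
  let : NormedSpace ℝ (Matrix (Fin n) (Fin n) ℂ) := Matrix.normedSpace
  exact continuousOn_univ.mp (realPartTraceNorm.convexOn.continuousOn isOpen_univ)

lemma exists_mem_Icc_le_re_trace_mul {D : Set (Matrix (Fin n) (Fin n) ℂ)} (hD : Convex ℝ D)
    (hDherm : ∀ X ∈ D, X.IsHermitian) {d : ℝ} (hd : ∀ X ∈ D, d ≤ traceNorm X) :
    ∃ Q ∈ Set.Icc (-1 : Matrix (Fin n) (Fin n) ℂ) 1, ∀ X ∈ D, d ≤ (Q * X).trace.re := by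
  obtain ⟨f, hfp, hfD⟩ := realPartTraceNorm.exists_clm_le_and_ge_on_convex
    continuous_realPartTraceNorm hD fun X hX => by
      rw [realPartTraceNorm_of_isHermitian (hDherm X hX)]
      exact hd X hX
  obtain ⟨Q₀, hQ₀⟩ := exists_re_trace_mul_eq f.toLinearMap
  have hf (X : Matrix (Fin n) (Fin n) ℂ) (hX : X.IsHermitian) :
      ((realPart Q₀ : Matrix (Fin n) (Fin n) ℂ) * X).trace.re = f X := by
    rw [re_trace_realPart_mul hX, ← hQ₀]
    rfl
  refine ⟨realPart Q₀, mem_Icc_of_re_trace_mul_le_traceNorm (realPart Q₀).2 fun Y hY => ?_,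
    fun X hX => ?_⟩
  · rw [hf Y hY, ← realPartTraceNorm_of_isHermitian hY]
    exact hfp Y
  · rw [hf X (hDherm X hX)]
    exact hfD X hX

theorem stmt10_general {n : ℕ} (A₀ A₁ : Set (Matrix (Fin n) (Fin n) ℂ))
    (h₀conv : Convex ℝ A₀) (h₁conv : Convex ℝ A₁)
    (h₀den : ∀ ρ ∈ A₀, ρ.PosSemidef ∧ ρ.trace = 1)
    (h₁den : ∀ ρ ∈ A₁, ρ.PosSemidef ∧ ρ.trace = 1)
    (d : ℝ)
    (hdmin : IsLeast {r : ℝ | ∃ σ₀ ∈ A₀, ∃ σ₁ ∈ A₁, r = traceNorm (σ₀ - σ₁)} d) :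
    ∃ P₀ P₁ : Matrix (Fin n) (Fin n) ℂ,
      P₀.PosSemidef ∧ P₁.PosSemidef ∧ P₀ + P₁ = 1 ∧
      ∀ ρ₀ ∈ A₀, ∀ ρ₁ ∈ A₁, d ≤ (((P₀ - P₁) * (ρ₀ - ρ₁)).trace).re := by
  have hherm : ∀ X ∈ A₀ - A₁, X.IsHermitian := by
    rintro _ ⟨ρ₀, hρ₀, ρ₁, hρ₁, rfl⟩
    exact (h₀den ρ₀ hρ₀).1.1.sub (h₁den ρ₁ hρ₁).1.1
  have hd : ∀ X ∈ A₀ - A₁, d ≤ traceNorm X := by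
    rintro _ ⟨ρ₀, hρ₀, ρ₁, hρ₁, rfl⟩
    exact hdmin.2 ⟨ρ₀, hρ₀, ρ₁, hρ₁, rfl⟩
  obtain ⟨Q, ⟨hQ₁, hQ₂⟩, hQ⟩ := exists_mem_Icc_le_re_trace_mul (h₀conv.sub h₁conv) hherm hd
  have hP₀ : (1 + Q).PosSemidef := by simpa [add_comm] using le_iff.mp hQ₁
  have hP₁ : (1 - Q).PosSemidef := le_iff.mp hQ₂
  refine ⟨(2⁻¹ : ℂ) • (1 + Q), (2⁻¹ : ℂ) • (1 - Q), hP₀.smul (by positivity),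
    hP₁.smul (by positivity), by module, fun ρ₀ hρ₀ ρ₁ hρ₁ => ?_⟩
  rw [show (2⁻¹ : ℂ) • (1 + Q) - (2⁻¹ : ℂ) • (1 - Q) = Q by module]
  exact hQ _ (Set.sub_mem_sub hρ₀ hρ₁)

/-- Gutoski–Watrous convex-set state discrimination: for nonempty compact convex sets
`A₀, A₁` of density operators with minimal trace-norm distance `d`, there is a single
two-outcome measurement `{P₀, P₁}` with `⟨P₀ - P₁, ρ₀ - ρ₁⟩ ≥ d` for all `ρ₀ ∈ A₀`,
`ρ₁ ∈ A₁`. -/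
theorem stmt10 {n : ℕ} (A₀ A₁ : Set (Matrix (Fin n) (Fin n) ℂ))
    (h₀ne : A₀.Nonempty) (h₁ne : A₁.Nonempty)
    (h₀cpt : IsCompact A₀) (h₁cpt : IsCompact A₁)
    (h₀conv : Convex ℝ A₀) (h₁conv : Convex ℝ A₁)
    (h₀den : ∀ ρ ∈ A₀, ρ.PosSemidef ∧ ρ.trace = 1)
    (h₁den : ∀ ρ ∈ A₁, ρ.PosSemidef ∧ ρ.trace = 1)
    (d : ℝ)
    (hdmin : IsLeast {r : ℝ | ∃ σ₀ ∈ A₀, ∃ σ₁ ∈ A₁, r = traceNorm (σ₀ - σ₁)} d) :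
    ∃ P₀ P₁ : Matrix (Fin n) (Fin n) ℂ,
      P₀.PosSemidef ∧ P₁.PosSemidef ∧ P₀ + P₁ = 1 ∧
      ∀ ρ₀ ∈ A₀, ∀ ρ₁ ∈ A₁, d ≤ (((P₀ - P₁) * (ρ₀ - ρ₁)).trace).re :=
  stmt10_general A₀ A₁ h₀conv h₁conv h₀den h₁den d hdmin
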